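/- arXiv:2003.07084 — 6 statements merged into one kernel-verified Lean document; each statement's English description precedes it below -/
import Mathlib

section
/- Let d ≥ 2, p ∈ (1,∞), and r > 0. Then for every index i ≠ 1, (1/2)·⨍_{∂B_r} |y₁|^p dσ(y) = ((p−1)/2)·⨍_{∂B_r} |y₁|^{p-2} y_i² dσ(y), where ⨍ denotes the average over the sphere ∂B_r ⊂ ℝ^d of radius r centered at the origin. -/
/-!
Rotating the `(y z, y i)`-plane by an angle `θ` preserves the measure on the sphere. Averaging
over `θ ∈ (0, 2π]` and using Tonelli, `2π` times the integral of a function `g (y z, y i)` that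
is positively homogeneous of degree `p` equals `∫₀^{2π} g (cos θ, sin θ) dθ` times `∫ ρ ^ p`,
where `ρ = √(y z ^ 2 + y i ^ 2)`. Both integrands are of this form, so everything reduces to
`∫₀^{2π} |cos θ| ^ p = (p - 1) ∫₀^{2π} |cos θ| ^ (p - 2) sin θ ^ 2`, an integration by parts
against `|cos θ| ^ (p - 2) cos θ sin θ`. Working with lower Lebesgue integrals, no integrability
on the sphere is needed.
-/

open Real MeasureTheory Metric Set

theorem abs_rpow_sub_two_mul_sq {p : ℝ} (hp : p ≠ 0) (c : ℝ) :
    |c| ^ (p - 2) * c ^ 2 = |c| ^ p := by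
  rcases eq_or_ne c 0 with rfl | hc
  · simp [zero_rpow hp]
  · rw [← sq_abs, ← rpow_natCast, ← rpow_add (abs_pos.2 hc)]
    norm_num

theorem continuous_abs_rpow_mul_self {q : ℝ} (hq : -1 < q) :
    Continuous fun x : ℝ => |x| ^ q * x := by
  refine continuous_iff_continuousAt.2 fun c => ?_
  rcases eq_or_ne c 0 with rfl | hc
  · have hnorm : ∀ x : ℝ, ‖|x| ^ q * x‖ = |x| ^ (q + 1) := fun x => by
      rw [Real.norm_eq_abs, abs_mul, abs_of_nonneg (by positivity)]
      rcases eq_or_ne x 0 with rfl | hx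
      · simp [zero_rpow (by linarith : q + 1 ≠ 0)]
      · rw [rpow_add_one (abs_ne_zero.2 hx)]
    have h0 : Continuous fun x : ℝ => |x| ^ (q + 1) :=
      continuous_abs.rpow_const fun _ => Or.inr (by linarith)
    have h : Filter.Tendsto (fun x : ℝ => |x| ^ q * x) (nhds 0) (nhds 0) :=
      tendsto_zero_iff_norm_tendsto_zero.2 <| by
        simpa [hnorm, zero_rpow (by linarith : q + 1 ≠ 0)] using h0.tendsto 0
    simpa [ContinuousAt] using h
  · exact (continuous_abs.continuousAt.rpow_const (Or.inl (abs_ne_zero.2 hc))).mul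
      continuousAt_id

theorem hasDerivAt_abs_rpow_mul_self (q : ℝ) {c : ℝ} (hc : c ≠ 0) :
    HasDerivAt (fun x : ℝ => |x| ^ q * x) ((q + 1) * |c| ^ q) c := by
  have h := ((hasDerivAt_abs hc).rpow_const (p := q) (Or.inl (abs_ne_zero.2 hc))).mul
    (hasDerivAt_id' c)
  have e : |c| ^ (q - 1) * |c| = |c| ^ q := by
    rw [← rpow_add_one (abs_ne_zero.2 hc), sub_add_cancel]
  have hs : (SignType.sign c : ℝ) * c = |c| := sign_mul_self c
  refine h.congr_deriv ?_
  linear_combination (q * |c| ^ (q - 1)) * hs + q * e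

theorem intervalIntegrable_abs_cos_rpow {s : ℝ} (hs : -1 < s) (a b : ℝ) :
    IntervalIntegrable (fun θ => |cos θ| ^ s) volume a b := by
  have hper : Function.Periodic (fun θ => |cos θ| ^ s) π := fun θ => by simp [cos_add_pi]
  have hhalf : IntervalIntegrable (fun θ => |cos θ| ^ s) volume 0 (π / 2) := by
    rcases le_or_gt 0 s with hs0 | hs0
    · exact (continuous_cos.abs.rpow_const fun _ => Or.inr hs0).intervalIntegrable _ _
    have hdom : IntervalIntegrable (fun θ => (2 / π) ^ s * (π / 2 - θ) ^ s) volume 0 (π / 2) := by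
      simpa using (((intervalIntegral.intervalIntegrable_rpow' hs).comp_sub_left (π / 2)).symm
        |>.const_mul ((2 / π) ^ s) : IntervalIntegrable _ volume (π / 2 - π / 2) (π / 2 - 0))
    refine hdom.mono_fun (continuous_cos.abs.measurable.pow_const s).aestronglyMeasurable ?_
    filter_upwards [ae_restrict_mem measurableSet_uIoc] with θ hθ
    rw [uIoc_of_le (by positivity)] at hθ
    rw [norm_of_nonneg (by positivity),
      norm_of_nonneg (mul_nonneg (by positivity) (rpow_nonneg (by linarith [hθ.2]) _))]
    rcases hθ.2.eq_or_lt with rfl | hlt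
    · simp [zero_rpow hs0.ne]
    -- Jordan's inequality bounds the singularity of `|cos θ| ^ s` at `π / 2`.
    have hjordan : 2 / π * (π / 2 - θ) ≤ |cos θ| := by
      rw [← sin_pi_div_two_sub]
      exact (mul_le_sin (by linarith) (by linarith [hθ.1])).trans (le_abs_self _)
    rw [← mul_rpow (by positivity) (by linarith)]
    exact rpow_le_rpow_of_nonpos (by have := pi_pos; positivity) hjordan hs0.le
  have hneg : IntervalIntegrable (fun θ => |cos θ| ^ s) volume (-(π / 2)) 0 := by
    rw [IntervalIntegrable.iff_comp_neg]
    simpa using hhalf.symm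
  exact hper.intervalIntegrable pi_ne_zero (t := -(π / 2))
    (by convert hneg.trans hhalf using 1; ring) a b

theorem intervalIntegrable_abs_cos_rpow_mul_sin_sq {s : ℝ} (hs : -1 < s) (a b : ℝ) :
    IntervalIntegrable (fun θ => |cos θ| ^ s * sin θ ^ 2) volume a b := by
  refine (intervalIntegrable_abs_cos_rpow hs a b).mono_fun (by fun_prop)
    (Filter.Eventually.of_forall fun θ => ?_)
  dsimp only
  rw [norm_of_nonneg (by positivity), norm_of_nonneg (by positivity)]
  exact mul_le_of_le_one_right (by positivity) (sin_sq_le_one θ)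

theorem countable_setOf_cos_eq_zero : {θ : ℝ | cos θ = 0}.Countable :=
  (countable_range fun k : ℤ => (2 * k + 1) * π / 2).mono fun _ hθ => by
    obtain ⟨k, hk⟩ := cos_eq_zero_iff.1 hθ
    exact ⟨k, hk.symm⟩

theorem integral_abs_cos_rpow_eq {p : ℝ} (hp : 1 < p) :
    ∫ θ in 0..2 * π, |cos θ| ^ p
      = (p - 1) * ∫ θ in 0..2 * π, |cos θ| ^ (p - 2) * sin θ ^ 2 := by
  have hderiv : ∀ θ ∈ Ioo 0 (2 * π) \ {θ | cos θ = 0}, HasDerivAt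
      (fun θ => |cos θ| ^ (p - 2) * cos θ * sin θ)
      (|cos θ| ^ p - (p - 1) * (|cos θ| ^ (p - 2) * sin θ ^ 2)) θ := fun θ hθ => by
    refine (((hasDerivAt_abs_rpow_mul_self (p - 2) hθ.2).comp θ (hasDerivAt_cos θ)).mul
      (hasDerivAt_sin θ)).congr_deriv ?_
    simp only [Function.comp_apply]
    linear_combination abs_rpow_sub_two_mul_sq (by linarith) (cos θ)
  have hcont : Continuous fun θ => |cos θ| ^ (p - 2) * cos θ * sin θ :=
    ((continuous_abs_rpow_mul_self (by linarith)).comp continuous_cos).mul continuous_sin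
  have hint₁ : IntervalIntegrable (fun θ => |cos θ| ^ p) volume 0 (2 * π) :=
    (continuous_cos.abs.rpow_const fun _ => Or.inr (by linarith)).intervalIntegrable _ _
  have hint₂ := intervalIntegrable_abs_cos_rpow_mul_sin_sq (s := p - 2) (by linarith) 0 (2 * π)
  have hftc := integral_eq_of_hasDerivAt_off_countable_of_le _ _ (by positivity)
    countable_setOf_cos_eq_zero hcont.continuousOn hderiv (hint₁.sub (hint₂.const_mul _))
  rw [intervalIntegral.integral_sub hint₁ (hint₂.const_mul _),
    intervalIntegral.integral_const_mul] at hftc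
  simp only [sin_two_pi, sin_zero, mul_zero, sub_zero] at hftc
  linarith

theorem lintegral_abs_cos_rpow_eq {p : ℝ} (hp : 1 < p) :
    ∫⁻ θ in Ioc 0 (2 * π), ENNReal.ofReal (|cos θ| ^ p)
      = ENNReal.ofReal (p - 1)
        * ∫⁻ θ in Ioc 0 (2 * π), ENNReal.ofReal (|cos θ| ^ (p - 2) * sin θ ^ 2) := by
  have hint₁ : IntervalIntegrable (fun θ => |cos θ| ^ p) volume 0 (2 * π) :=
    (continuous_cos.abs.rpow_const fun _ => Or.inr (by linarith)).intervalIntegrable _ _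
  have hint₂ := intervalIntegrable_abs_cos_rpow_mul_sin_sq (s := p - 2) (by linarith) 0 (2 * π)
  rw [← ofReal_integral_eq_lintegral_ofReal hint₁.1 (.of_forall fun _ => by positivity),
    ← ofReal_integral_eq_lintegral_ofReal hint₂.1 (.of_forall fun _ => by positivity),
    ← ENNReal.ofReal_mul (by linarith), ← intervalIntegral.integral_of_le (by positivity),
    ← intervalIntegral.integral_of_le (by positivity), integral_abs_cos_rpow_eq hp]

theorem Function.Periodic.setLIntegral_Ioc_comp_add_right {f : ℝ → ENNReal} {T : ℝ}
    (hf : Function.Periodic f T) (hT : 0 < T) (φ : ℝ) :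
    ∫⁻ x in Ioc 0 T, f (x + φ) = ∫⁻ x in Ioc 0 T, f x := by
  have : Fact (0 < T) := ⟨hT⟩
  have h := AddCircle.lintegral_preimage T 0 fun x => hf.lift (x + (φ : AddCircle T))
  have h' := AddCircle.lintegral_preimage T 0 hf.lift
  simp only [zero_add, ← AddCircle.coe_add, Function.Periodic.lift_coe] at h h'
  rw [h, h', lintegral_add_right_eq_self]

theorem exists_eq_sqrt_mul_cos_and_eq_sqrt_mul_sin (a b : ℝ) :
    ∃ φ, a = √(a ^ 2 + b ^ 2) * cos φ ∧ b = √(a ^ 2 + b ^ 2) * sin φ := by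
  have h : ‖(⟨a, b⟩ : ℂ)‖ = √(a ^ 2 + b ^ 2) := by
    rw [Complex.norm_def, Complex.normSq_mk, sq, sq]
  exact ⟨Complex.arg ⟨a, b⟩, by rw [← h, Complex.norm_mul_cos_arg],
    by rw [← h, Complex.norm_mul_sin_arg]⟩

section PlaneRotation

variable {n : ℕ} {z i : Fin n}

noncomputable def planeRotationLinearMap (z i : Fin n) (θ : ℝ) :
    EuclideanSpace ℝ (Fin n) →ₗ[ℝ] EuclideanSpace ℝ (Fin n) where
  toFun y := WithLp.toLp 2 fun j =>
    if j = z then cos θ * y z - sin θ * y i else if j = i then sin θ * y z + cos θ * y i else y j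
  map_add' x y := by ext j; simp only [PiLp.add_apply]; split_ifs <;> ring
  map_smul' c y := by
    ext j; simp only [PiLp.smul_apply, smul_eq_mul, RingHom.id_apply]; split_ifs <;> ring

theorem planeRotationLinearMap_apply_left (θ : ℝ) (y : EuclideanSpace ℝ (Fin n)) :
    planeRotationLinearMap z i θ y z = cos θ * y z - sin θ * y i := by
  simp [planeRotationLinearMap]

theorem planeRotationLinearMap_apply_right (hzi : z ≠ i) (θ : ℝ)
    (y : EuclideanSpace ℝ (Fin n)) :
    planeRotationLinearMap z i θ y i = sin θ * y z + cos θ * y i := by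
  simp [planeRotationLinearMap, hzi.symm]

theorem planeRotationLinearMap_apply_of_ne {j : Fin n} (hjz : j ≠ z) (hji : j ≠ i) (θ : ℝ)
    (y : EuclideanSpace ℝ (Fin n)) : planeRotationLinearMap z i θ y j = y j := by
  simp [planeRotationLinearMap, hjz, hji]

theorem planeRotationLinearMap_neg_apply (hzi : z ≠ i) (θ : ℝ) (y : EuclideanSpace ℝ (Fin n)) :
    planeRotationLinearMap z i (-θ) (planeRotationLinearMap z i θ y) = y := by
  ext j
  have h := sin_sq_add_cos_sq θ
  by_cases hjz : j = z
  · subst hjz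
    simp only [planeRotationLinearMap_apply_left, planeRotationLinearMap_apply_right hzi,
      cos_neg, sin_neg]
    linear_combination y j * h
  by_cases hji : j = i
  · subst hji
    simp only [planeRotationLinearMap_apply_left, planeRotationLinearMap_apply_right hzi,
      cos_neg, sin_neg]
    linear_combination y j * h
  simp only [planeRotationLinearMap_apply_of_ne hjz hji]

theorem norm_planeRotationLinearMap (hzi : z ≠ i) (θ : ℝ) (y : EuclideanSpace ℝ (Fin n)) :
    ‖planeRotationLinearMap z i θ y‖ = ‖y‖ := by
  simp only [EuclideanSpace.norm_eq, Real.norm_eq_abs, sq_abs]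
  congr 1
  rw [← sub_eq_zero, ← Finset.sum_sub_distrib, Fintype.sum_eq_add z i hzi fun j hj =>
    by rw [planeRotationLinearMap_apply_of_ne hj.1 hj.2, sub_self],
    planeRotationLinearMap_apply_left, planeRotationLinearMap_apply_right hzi]
  linear_combination (y z ^ 2 + y i ^ 2) * sin_sq_add_cos_sq θ

noncomputable def planeRotation (hzi : z ≠ i) (θ : ℝ) :
    EuclideanSpace ℝ (Fin n) ≃ₗᵢ[ℝ] EuclideanSpace ℝ (Fin n) where
  toLinearEquiv :=
    .ofLinearMap (planeRotationLinearMap z i θ) (planeRotationLinearMap z i (-θ))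
      (LinearMap.ext fun y => by simpa using planeRotationLinearMap_neg_apply hzi (-θ) y)
      (LinearMap.ext fun y => planeRotationLinearMap_neg_apply hzi θ y)
  norm_map' := norm_planeRotationLinearMap hzi θ

@[simp]
theorem planeRotation_apply_left (hzi : z ≠ i) (θ : ℝ) (y : EuclideanSpace ℝ (Fin n)) :
    planeRotation hzi θ y z = cos θ * y z - sin θ * y i :=
  planeRotationLinearMap_apply_left θ y

@[simp]
theorem planeRotation_apply_right (hzi : z ≠ i) (θ : ℝ) (y : EuclideanSpace ℝ (Fin n)) :
    planeRotation hzi θ y i = sin θ * y z + cos θ * y i :=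
  planeRotationLinearMap_apply_right hzi θ y

end PlaneRotation

theorem LinearIsometryEquiv.map_hausdorffMeasure_restrict_sphere {E : Type*}
    [NormedAddCommGroup E] [NormedSpace ℝ E] [MeasurableSpace E] [BorelSpace E]
    (e : E ≃ₗᵢ[ℝ] E) (s r : ℝ) :
    (μH[s].restrict (sphere (0 : E) r)).map e = μH[s].restrict (sphere (0 : E) r) := by
  have hpre : e ⁻¹' sphere 0 r = sphere 0 r := by rw [e.preimage_sphere, map_zero]
  conv_lhs => rw [← hpre]
  rw [← Measure.restrict_map e.continuous.measurable isClosed_sphere.measurableSet]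
  exact congrArg (Measure.restrict · _) (e.toIsometryEquiv.map_hausdorffMeasure s)

section Homogeneous

variable {g : ℝ × ℝ → ENNReal} {p : ℝ}

theorem setLIntegral_rotate_of_homogeneous
    (hg : ∀ ρ : ℝ, 0 ≤ ρ → ∀ v, g (ρ • v) = ENNReal.ofReal (ρ ^ p) * g v) (a b : ℝ) :
    ∫⁻ θ in Ioc 0 (2 * π), g (cos θ * a - sin θ * b, sin θ * a + cos θ * b)
      = ENNReal.ofReal (√(a ^ 2 + b ^ 2) ^ p) * ∫⁻ θ in Ioc 0 (2 * π), g (cos θ, sin θ) := by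
  obtain ⟨φ, ha, hb⟩ := exists_eq_sqrt_mul_cos_and_eq_sqrt_mul_sin a b
  have hrot : ∀ θ, (cos θ * a - sin θ * b, sin θ * a + cos θ * b)
      = √(a ^ 2 + b ^ 2) • (cos (θ + φ), sin (θ + φ)) := fun θ => by
    rw [Prod.smul_mk, smul_eq_mul, smul_eq_mul, cos_add, sin_add, Prod.mk.injEq]
    constructor
    · linear_combination cos θ * ha - sin θ * hb
    · linear_combination sin θ * ha + cos θ * hb
  have hper : Function.Periodic (fun θ => g (cos θ, sin θ)) (2 * π) := fun θ => by
    simp only [cos_add_two_pi, sin_add_two_pi]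
  simp only [hrot, hg _ (sqrt_nonneg _)]
  rw [lintegral_const_mul' _ _ ENNReal.ofReal_ne_top,
    hper.setLIntegral_Ioc_comp_add_right (by positivity) φ]

theorem ofReal_two_pi_mul_lintegral_of_homogeneous {n : ℕ} {z i : Fin n} (hzi : z ≠ i)
    {σ : Measure (EuclideanSpace ℝ (Fin n))} [SFinite σ]
    (hσ : ∀ θ, σ.map (planeRotation hzi θ) = σ) (hgm : Measurable g)
    (hg : ∀ ρ : ℝ, 0 ≤ ρ → ∀ v, g (ρ • v) = ENNReal.ofReal (ρ ^ p) * g v) :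
    ENNReal.ofReal (2 * π) * ∫⁻ y, g (y z, y i) ∂σ
      = (∫⁻ θ in Ioc 0 (2 * π), g (cos θ, sin θ))
        * ∫⁻ y, ENNReal.ofReal (√(y z ^ 2 + y i ^ 2) ^ p) ∂σ := by
  have hinv : ∀ θ, ∫⁻ y, g (cos θ * y z - sin θ * y i, sin θ * y z + cos θ * y i) ∂σ
      = ∫⁻ y, g (y z, y i) ∂σ := fun θ => by
    conv_rhs => rw [← hσ θ]
    rw [lintegral_map (by fun_prop) (planeRotation hzi θ).continuous.measurable]
    simp only [planeRotation_apply_left, planeRotation_apply_right]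
  calc ENNReal.ofReal (2 * π) * ∫⁻ y, g (y z, y i) ∂σ
      = ∫⁻ θ in Ioc 0 (2 * π),
          ∫⁻ y, g (cos θ * y z - sin θ * y i, sin θ * y z + cos θ * y i) ∂σ := by
        simp only [hinv, setLIntegral_const, Real.volume_Ioc, sub_zero, mul_comm]
    _ = ∫⁻ y, (∫⁻ θ in Ioc 0 (2 * π),
          g (cos θ * y z - sin θ * y i, sin θ * y z + cos θ * y i)) ∂σ :=
        lintegral_lintegral_swap (by fun_prop)
    _ = ∫⁻ y, ENNReal.ofReal (√(y z ^ 2 + y i ^ 2) ^ p)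
          * (∫⁻ θ in Ioc 0 (2 * π), g (cos θ, sin θ)) ∂σ := by
        simp only [setLIntegral_rotate_of_homogeneous hg]
    _ = _ := by rw [lintegral_mul_const _ (by fun_prop), mul_comm]

end Homogeneous

theorem integral_abs_rpow_eq_sub_one_mul_integral {n : ℕ} {z i : Fin n} (hzi : z ≠ i)
    {σ : Measure (EuclideanSpace ℝ (Fin n))} [SFinite σ]
    (hσ : ∀ θ, σ.map (planeRotation hzi θ) = σ) {p : ℝ} (hp : 1 < p) :
    ∫ y, |y z| ^ p ∂σ = (p - 1) * ∫ y, |y z| ^ (p - 2) * y i ^ 2 ∂σ := by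
  have h₁ := ofReal_two_pi_mul_lintegral_of_homogeneous hzi hσ
    (g := fun v => ENNReal.ofReal (|v.1| ^ p)) (by fun_prop) fun ρ hρ v => by
      rw [Prod.smul_fst, smul_eq_mul, abs_mul, mul_rpow (abs_nonneg _) (abs_nonneg _),
        abs_of_nonneg hρ, ENNReal.ofReal_mul (by positivity)]
  have h₂ := ofReal_two_pi_mul_lintegral_of_homogeneous hzi hσ (p := p)
    (g := fun v => ENNReal.ofReal (|v.1| ^ (p - 2) * v.2 ^ 2)) (by fun_prop) fun ρ hρ v => by
      have hρp := abs_rpow_sub_two_mul_sq (by linarith : p ≠ 0) ρ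
      rw [abs_of_nonneg hρ] at hρp
      rw [Prod.smul_fst, Prod.smul_snd, smul_eq_mul, smul_eq_mul, abs_mul,
        mul_rpow (abs_nonneg _) (abs_nonneg _), abs_of_nonneg hρ, ← hρp,
        ← ENNReal.ofReal_mul (by positivity)]
      ring_nf
  have hlin : ∫⁻ y, ENNReal.ofReal (|y z| ^ p) ∂σ
      = ENNReal.ofReal (p - 1) * ∫⁻ y, ENNReal.ofReal (|y z| ^ (p - 2) * y i ^ 2) ∂σ := by
    refine (ENNReal.mul_right_inj (ENNReal.ofReal_pos.2 two_pi_pos).ne'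
      ENNReal.ofReal_ne_top).1 ?_
    rw [h₁, mul_left_comm, h₂, lintegral_abs_cos_rpow_eq hp, mul_assoc]
  rw [integral_eq_lintegral_of_nonneg_ae (.of_forall fun _ => by positivity)
      (by fun_prop : Measurable fun y : EuclideanSpace ℝ (Fin n) => |y z| ^ p).aestronglyMeasurable,
    integral_eq_lintegral_of_nonneg_ae (.of_forall fun _ => by positivity)
      (by fun_prop : Measurable fun y : EuclideanSpace ℝ (Fin n) =>
        |y z| ^ (p - 2) * y i ^ 2).aestronglyMeasurable,
    hlin, ENNReal.toReal_mul, ENNReal.toReal_ofReal (by linarith)]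

theorem stmt_5 (d : ℕ) (hd : 2 ≤ d) (p r : ℝ) (hp : 1 < p)
    (i : Fin d) (hi : i ≠ ⟨0, by omega⟩) :
    (1 / 2) * ⨍ y in sphere (0 : EuclideanSpace ℝ (Fin d)) r,
        |y ⟨0, by omega⟩| ^ p ∂μH[(d : ℝ) - 1]
      = ((p - 1) / 2) * ⨍ y in sphere (0 : EuclideanSpace ℝ (Fin d)) r,
        |y ⟨0, by omega⟩| ^ (p - 2) * (y i) ^ 2 ∂μH[(d : ℝ) - 1] := by
  rw [setAverage_eq, setAverage_eq]
  rcases eq_or_ne (μH[(d : ℝ) - 1] (sphere (0 : EuclideanSpace ℝ (Fin d)) r)) ⊤ with htop | hfin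
  -- an average over a set of infinite measure is `0` by convention
  · simp [measureReal_def, htop]
  have : IsFiniteMeasure (μH[(d : ℝ) - 1].restrict (sphere (0 : EuclideanSpace ℝ (Fin d)) r)) :=
    ⟨by rwa [Measure.restrict_apply_univ, lt_top_iff_ne_top]⟩
  rw [integral_abs_rpow_eq_sub_one_mul_integral hi.symm
      (fun θ => (planeRotation hi.symm θ).map_hausdorffMeasure_restrict_sphere _ r) hp,
    smul_eq_mul, smul_eq_mul]
  ring
end

section
/- Let p ∈ (1,∞), α, β > 0, C > 0, ε ∈ ℝ with |ε| < 1/(2n+1) for an integer n ≥ 1, and define 𝔄̃(re^{iθ}) = C r^α cos((n+1)θ) in polar coordinates on ℝ² ≅ ℂ, m(θ) = √(1 + ε² + 2ε cos(2(n+1)θ)), and j(θ) = 1 − (2n+1)ε² − 2nε cos(2(n+1)θ). Then for every R > 0, ∫₀^{2π} ∫₀^{r(θ)} r^{α(p−1)+2β−1} |cos((n+1)θ)|^{p−2} cos((n+1)θ) j(θ) dr dθ = 0, where r(θ) = (R/m(θ))^{1/β}. -/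
open Real Function

theorem Function.Periodic.intervalIntegral_eq_zero_of_antiperiodic
    {E : Type*} [NormedAddCommGroup E] [NormedSpace ℝ E] {f : ℝ → E} {T c : ℝ}
    (hT : Periodic f T) (hc : Antiperiodic f c) (t : ℝ) :
    ∫ x in t..t + T, f x = 0 := by
  have h_neg : ∫ x in t..t + T, f x = -∫ x in t..t + T, f x := calc
    ∫ x in t..t + T, f x
      = ∫ x in t + c..t + c + T, f x := hT.intervalIntegral_add_eq t (t + c)
    _ = ∫ x in t..t + T, f (x + c) := by
        rw [intervalIntegral.integral_comp_add_right, add_right_comm]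
    _ = -∫ x in t..t + T, f x := by
        simp only [hc _, intervalIntegral.integral_neg]
  have h_two : (2 : ℝ) • ∫ x in t..t + T, f x = 0 := by
    rw [two_smul]; nth_rw 2 [h_neg]; exact add_neg_cancel _
  exact (smul_eq_zero.mp h_two).resolve_left two_ne_zero

-- Shifting `θ` by `π / k` flips the sign of `cos (k θ)` and fixes `cos (2 k θ)`.
theorem integral_comp_cos_two_mul_mul_odd_comp_cos_eq_zero (F ψ : ℝ → ℝ)
    (hψ : ψ.Odd) {k : ℕ} (hk : k ≠ 0) :
    ∫ θ in (0 : ℝ)..2 * π, F (cos (2 * k * θ)) * ψ (cos (k * θ)) = 0 := by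
  have hk' : (k : ℝ) ≠ 0 := Nat.cast_ne_zero.mpr hk
  have hper : Periodic (fun θ => F (cos (2 * k * θ)) * ψ (cos (k * θ))) (2 * π) := by
    intro θ
    have h₁ : k * (θ + 2 * π) = k * θ + k * (2 * π) := by ring
    have h₂ : 2 * k * (θ + 2 * π) = 2 * k * θ + ((2 * k : ℕ) : ℝ) * (2 * π) := by
      push_cast; ring
    simp only [h₁, h₂, cos_add_nat_mul_two_pi]
  have hanti : Antiperiodic (fun θ => F (cos (2 * k * θ)) * ψ (cos (k * θ))) (π / k) := by
    intro θ
    have h₁ : k * (θ + π / k) = k * θ + π := by field_simp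
    have h₂ : 2 * k * (θ + π / k) = 2 * k * θ + 2 * π := by field_simp
    simp only [h₁, h₂, cos_add_pi, cos_add_two_pi, hψ _, mul_neg]
  simpa using hper.intervalIntegral_eq_zero_of_antiperiodic hanti 0

theorem stmt_12_general (n : ℕ) (p α β ε R : ℝ) :
    ∫ θ in (0 : ℝ)..(2 * π),
      ∫ r in (0 : ℝ)..((R / Real.sqrt (1 + ε ^ 2 + 2 * ε * Real.cos (2 * ((n : ℝ) + 1) * θ))) ^ (1 / β)),
        r ^ (α * (p - 1) + 2 * β - 1) *
          (|Real.cos (((n : ℝ) + 1) * θ)| ^ (p - 2) * Real.cos (((n : ℝ) + 1) * θ)) *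
          (1 - (2 * (n : ℝ) + 1) * ε ^ 2 - 2 * (n : ℝ) * ε * Real.cos (2 * ((n : ℝ) + 1) * θ))
      = 0 := by
  have h := integral_comp_cos_two_mul_mul_odd_comp_cos_eq_zero
    (fun x => (∫ r in (0 : ℝ)..(R / √(1 + ε ^ 2 + 2 * ε * x)) ^ (1 / β),
      r ^ (α * (p - 1) + 2 * β - 1)) * (1 - (2 * (n : ℝ) + 1) * ε ^ 2 - 2 * n * ε * x))
    (fun y => |y| ^ (p - 2) * y) (fun y => by simp only [abs_neg, mul_neg]) n.succ_ne_zero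
  push_cast at h
  refine Eq.trans ?_ h
  congr 1 with θ
  simp only [intervalIntegral.integral_mul_const]
  ring

theorem stmt_12 (n : ℕ) (hn : 1 ≤ n) (p α β C ε R : ℝ)
    (hp : 1 < p) (hα : 0 < α) (hβ : 0 < β) (hC : 0 < C)
    (hε : |ε| < 1 / (2 * (n : ℝ) + 1)) (hR : 0 < R) :
    ∫ θ in (0 : ℝ)..(2 * π),
      ∫ r in (0 : ℝ)..((R / Real.sqrt (1 + ε ^ 2 + 2 * ε * Real.cos (2 * ((n : ℝ) + 1) * θ))) ^ (1 / β)),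
        r ^ (α * (p - 1) + 2 * β - 1) *
          (|Real.cos (((n : ℝ) + 1) * θ)| ^ (p - 2) * Real.cos (((n : ℝ) + 1) * θ)) *
          (1 - (2 * (n : ℝ) + 1) * ε ^ 2 - 2 * (n : ℝ) * ε * Real.cos (2 * ((n : ℝ) + 1) * θ))
      = 0 :=
  stmt_12_general n p α β ε R
end

section
/- Let p ∈ (1,∞), d ≥ 1, and r > 0. Define for bounded measurable functions U, V on Ω_r = Ω ∪ ∂Ω_r (Ω ⊂ ℝ^d bounded open, ∂Ω_r = {x ∉ Ω : dist(x,Ω) ≤ r}) the operator M^p[W](x) = (1/(D_{d,p}r^p)) ⨍_{B_r} J_p(W(x+y)−W(x)) dy for x ∈ Ω. Suppose −M^p[V](x) ≥ f(x) and −M^p[U](x) ≤ f(x) for all x ∈ Ω, and V ≥ G ≥ U on ∂Ω_r, for some functions f on Ω and G on ∂Ω_r. Then U ≤ V on Ω_r. -/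
/-!
Suppose `S = sup (U - V) > 0`; since `U ≤ V` on the boundary strip, near-maximizers of `U - V`
lie in `Ω`. At a point `z` where `U - V ≥ S - ε`, the increments satisfy
`U(z+y) - U(z) ≤ V(z+y) - V(z) + ε`, while `∫ J(V-increment) ≤ ∫ J(U-increment)`. Strict
monotonicity of `J`, made uniform by compactness, forces `U - V > S - ε'` on most of the ball
around `z`, in particular at some point of a fixed small ball on which a linear functional `ℓ`
exceeds `r / 4`. Iterating, with tolerances shrinking backwards from `S / 2`, produces points of
`Ω` with arbitrarily large `ℓ`, contradicting the boundedness of `Ω`.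
-/

open Real MeasureTheory Metric Set

/-- The function `J_p` of the paper. -/
noncomputable def signedRpow (p t : ℝ) : ℝ := |t| ^ (p - 2) * t

lemma signedRpow_of_nonneg {p t : ℝ} (hp : 1 < p) (ht : 0 ≤ t) : signedRpow p t = t ^ (p - 1) := by
  rcases ht.eq_or_lt with rfl | ht
  · simp [signedRpow, zero_rpow (by linarith : p - 1 ≠ 0)]
  · rw [signedRpow, abs_of_pos ht, show p - 1 = (p - 2) + 1 by ring, rpow_add_one ht.ne']

lemma signedRpow_neg (p t : ℝ) : signedRpow p (-t) = -signedRpow p t := by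
  simp only [signedRpow, abs_neg, mul_neg]

lemma signedRpow_strictMono {p : ℝ} (hp : 1 < p) : StrictMono (signedRpow p) :=
  strictMono_of_odd_strictMonoOn_nonneg (signedRpow_neg p) fun s hs t ht hst => by
    rw [signedRpow_of_nonneg hp hs, signedRpow_of_nonneg hp ht]
    exact rpow_lt_rpow hs hst (by linarith)

lemma continuous_signedRpow {p : ℝ} (hp : 1 < p) : Continuous (signedRpow p) := by
  have hpow : Continuous fun t : ℝ => t ^ (p - 1) := continuous_rpow_const (by linarith)
  have hpiece : signedRpow p = fun t => if 0 ≤ t then t ^ (p - 1) else -(-t) ^ (p - 1) := by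
    ext t
    split_ifs with ht
    · exact signedRpow_of_nonneg hp ht
    · rw [← neg_neg t, signedRpow_neg, signedRpow_of_nonneg hp (by linarith), neg_neg]
  rw [hpiece]
  exact hpow.if_le (hpow.comp continuous_neg).neg continuous_const continuous_id fun t ht => by
    simp [← ht, zero_rpow (by linarith : p - 1 ≠ 0)]

lemma setIntegral_le_of_setAverage_le {α : Type*} [MeasurableSpace α] {μ : Measure α}
    {s : Set α} {f g : α → ℝ} (hs : 0 < μ.real s)
    (h : ⨍ x in s, f x ∂μ ≤ ⨍ x in s, g x ∂μ) : ∫ x in s, f x ∂μ ≤ ∫ x in s, g x ∂μ := by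
  rw [setAverage_eq, setAverage_eq, smul_eq_mul, smul_eq_mul] at h
  exact le_of_mul_le_mul_left h (inv_pos.2 hs)

lemma mul_measureReal_inter_le_of_setIntegral_nonpos {α : Type*} [MeasurableSpace α]
    {μ : Measure α} {s E : Set α} {h : α → ℝ} {c β : ℝ} (hs : MeasurableSet s)
    (hE : MeasurableSet E) (hμs : μ s ≠ ⊤) (hh : IntegrableOn h s μ)
    (hh₀ : ∫ x in s, h x ∂μ ≤ 0) (hhE : ∀ x ∈ s ∩ E, c ≤ h x) (hhβ : ∀ x ∈ s \ E, -β ≤ h x) :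
    c * μ.real (s ∩ E) ≤ β * μ.real (s \ E) := by
  have hin := setIntegral_ge_of_const_le_real (hs.inter hE)
    (measure_ne_top_of_subset inter_subset_left hμs) hhE (hh.mono_set inter_subset_left)
  have hout := setIntegral_ge_of_const_le_real (hs.diff hE)
    (measure_ne_top_of_subset sdiff_subset hμs) hhβ (hh.mono_set sdiff_subset)
  rw [← integral_inter_add_sdiff hE hh] at hh₀
  linarith

section

variable {J : ℝ → ℝ}

lemma exists_pos_forall_abs_le_sub_add_le (hJc : Continuous J) (hJm : StrictMono J) (K : ℝ)
    {δ : ℝ} (hδ : 0 < δ) : ∃ c > 0, ∀ t, |t| ≤ K → J (t - δ) + c ≤ J t := by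
  obtain ⟨c, hc, hcle⟩ := isCompact_Icc.exists_forall_le' (a := 0) (s := Icc (-K) K)
    (f := fun t => J t - J (t - δ))
    (hJc.sub (hJc.comp (continuous_sub_right δ))).continuousOn
    fun t _ => sub_pos.2 (hJm (by linarith))
  exact ⟨c, hc, fun t ht => by linarith [hcle t (abs_le.1 ht)]⟩

lemma exists_pos_forall_abs_le_add_le_add (hJc : Continuous J) (K : ℝ) {β : ℝ} (hβ : 0 < β) :
    ∃ ε > 0, ∀ t, |t| ≤ K → J (t + ε) ≤ J t + β := by
  obtain ⟨δ, hδ, hJδ⟩ := Metric.uniformContinuousOn_iff.1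
    ((isCompact_Icc (a := -(K + 1)) (b := K + 1)).uniformContinuousOn_of_continuous
      hJc.continuousOn) β hβ
  refine ⟨min (δ / 2) 1, by positivity, fun t ht => ?_⟩
  have hε : 0 < min (δ / 2) 1 := by positivity
  have hε₁ : min (δ / 2) 1 ≤ 1 := min_le_right _ _
  have hεδ : min (δ / 2) 1 < δ := (min_le_left _ _).trans_lt (by linarith)
  obtain ⟨ht₁, ht₂⟩ := abs_le.1 ht
  have := hJδ (t + min (δ / 2) 1) ⟨by linarith, by linarith⟩ t ⟨by linarith, by linarith⟩
    (by rwa [Real.dist_eq, add_sub_cancel_left, abs_of_pos hε])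
  linarith [(abs_lt.1 (Real.dist_eq _ _ ▸ this)).2]

lemma integrableOn_comp_of_abs_le {α : Type*} [MeasurableSpace α] {μ : Measure α} {s : Set α}
    (hs : MeasurableSet s) (hμs : μ s ≠ ⊤) (hJc : Continuous J) {a : α → ℝ} (ha : Measurable a)
    {K : ℝ} (haK : ∀ x ∈ s, |a x| ≤ K) : IntegrableOn (fun x => J (a x)) s μ := by
  obtain ⟨C, hC⟩ := (isCompact_Icc (a := -K) (b := K)).exists_bound_of_continuousOn hJc.continuousOn
  exact Measure.integrableOn_of_bounded hμs (hJc.measurable.comp ha).aestronglyMeasurable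
    ((ae_restrict_iff' hs).2 (.of_forall fun x hx => hC _ (abs_le.1 (haK x hx))))

lemma measureReal_inter_le_of_setIntegral_le (hJc : Continuous J) (hJm : StrictMono J)
    {K δ θ : ℝ} (hδ : 0 < δ) (hθ : 0 < θ) {α : Type*} [MeasurableSpace α] {μ : Measure α}
    {s : Set α} (hs : MeasurableSet s) (hμs : μ s ≠ ⊤) :
    ∃ ε > 0, ∀ (a b : α → ℝ) (E : Set α), MeasurableSet E →
      IntegrableOn (fun x => J (a x)) s μ → IntegrableOn (fun x => J (b x)) s μ →
      (∀ x ∈ s, |a x| ≤ K) → (∀ x ∈ s, b x ≤ a x + ε) → (∀ x ∈ s ∩ E, b x ≤ a x - δ) →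
      ∫ x in s, J (a x) ∂μ ≤ ∫ x in s, J (b x) ∂μ → μ.real (s ∩ E) ≤ θ * μ.real s := by
  obtain ⟨c, hc, hgap⟩ := exists_pos_forall_abs_le_sub_add_le hJc hJm K hδ
  obtain ⟨ε, hε, hmod⟩ := exists_pos_forall_abs_le_add_le_add hJc K (mul_pos hc hθ)
  refine ⟨ε, hε, fun a b E hE hia hib haK hbε hbδ hab => ?_⟩
  have hcE := mul_measureReal_inter_le_of_setIntegral_nonpos (h := fun x => J (a x) - J (b x))
    (c := c) (β := c * θ) hs hE hμs (hia.sub hib) (by rw [integral_sub hia hib]; linarith)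
    (fun x hx => by linarith [hJm.monotone (hbδ x hx), hgap _ (haK x hx.1)])
    (fun x hx => by linarith [hJm.monotone (hbε x hx.1), hmod _ (haK x hx.1)])
  have hdiff : μ.real (s \ E) ≤ μ.real s := measureReal_mono sdiff_subset hμs
  refine le_of_mul_le_mul_left (hcE.trans ?_) hc
  rw [mul_assoc]
  gcongr

end

lemma false_of_forall_exists_advance {X : Type*} (A : ℝ → Set X) (φ : X → ℝ) {R κ ε₀ : ℝ}
    (hκ : 0 < κ) (hε₀ : 0 < ε₀) (hφ : ∀ ε, ∀ z ∈ A ε, |φ z| ≤ R)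
    (hA : ∀ ε ∈ Ioc 0 ε₀, (A ε).Nonempty)
    (hadv : ∀ ε' ∈ Ioc 0 ε₀, ∃ ε ∈ Ioc 0 ε', ∀ z ∈ A ε, ∃ z' ∈ A ε', φ z + κ ≤ φ z') : False := by
  have hchain : ∀ n : ℕ, ∃ ε ∈ Ioc 0 ε₀, ∀ z ∈ A ε, φ z + n * κ ≤ R := by
    intro n
    induction n with
    | zero => exact ⟨ε₀, ⟨hε₀, le_rfl⟩, fun z hz => by simpa using (abs_le.1 (hφ ε₀ z hz)).2⟩
    | succ n ih =>
      obtain ⟨εn, hεn, hreach⟩ := ih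
      obtain ⟨ε, hε, hstep⟩ := hadv εn hεn
      refine ⟨ε, ⟨hε.1, hε.2.trans hεn.2⟩, fun z hz => ?_⟩
      obtain ⟨z', hz', hφz'⟩ := hstep z hz
      push_cast
      linarith [hreach z' hz']
  obtain ⟨n, hn⟩ := exists_nat_gt (2 * R / κ)
  obtain ⟨ε, hε, hreach⟩ := hchain n
  obtain ⟨z, hz⟩ := hA ε hε
  have hnκ : 2 * R < n * κ := (div_lt_iff₀ hκ).1 hn
  linarith [hreach z hz, (abs_le.1 (hφ ε z hz)).1]

lemma exists_clm_lt_on_ball_subset_ball (E : Type*) [NormedAddCommGroup E] [NormedSpace ℝ E]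
    [Nontrivial E] {r : ℝ} (hr : 0 < r) :
    ∃ (ℓ : E →L[ℝ] ℝ) (c : E), ball c (r / 4) ⊆ ball 0 r ∧ ∀ y ∈ ball c (r / 4), r / 4 < ℓ y := by
  obtain ⟨e, he⟩ := exists_norm_eq E zero_le_one
  obtain ⟨ℓ, hℓ, hℓe⟩ := exists_dual_vector ℝ e (by rw [he]; exact one_ne_zero)
  have hc : ‖(r / 2) • e‖ = r / 2 := by
    rw [norm_smul, he, Real.norm_of_nonneg (by positivity), mul_one]
  refine ⟨ℓ, (r / 2) • e, ball_subset_ball' (by rw [dist_zero_right, hc]; linarith), fun y hy => ?_⟩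
  have hdev : |ℓ (y - (r / 2) • e)| < r / 4 := by
    calc |ℓ (y - (r / 2) • e)| ≤ ‖ℓ‖ * ‖y - (r / 2) • e‖ := ℓ.le_opNorm _
      _ < r / 4 := by rw [hℓ, one_mul, ← dist_eq_norm]; exact hy
  have hℓc : ℓ ((r / 2) • e) = r / 2 := by
    rw [map_smul, hℓe, he, smul_eq_mul, RCLike.ofReal_one, mul_one]
  have : ℓ y = ℓ ((r / 2) • e) + ℓ (y - (r / 2) • e) := by rw [← map_add, add_sub_cancel]
  linarith [(abs_lt.1 hdev).1]

def boundaryStrip {E : Type*} [MetricSpace E] (Ω : Set E) (r : ℝ) : Set E :=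
  {x | x ∉ Ω ∧ infDist x Ω ≤ r}

lemma add_mem_union_boundaryStrip {E : Type*} [NormedAddCommGroup E] {Ω : Set E} {r : ℝ}
    {z y : E} (hz : z ∈ Ω) (hy : y ∈ ball 0 r) : z + y ∈ Ω ∪ boundaryStrip Ω r := by
  by_cases h : z + y ∈ Ω
  · exact Or.inl h
  · refine Or.inr ⟨h, (infDist_le_dist_of_mem hz).trans ?_⟩
    rw [dist_eq_norm, add_sub_cancel_left]
    exact (mem_ball_zero_iff.1 hy).le

lemma abs_sub_le_of_mem_ball {E : Type*} [NormedAddCommGroup E] {Ω : Set E} {r M : ℝ}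
    {W : E → ℝ} (hW : ∀ x ∈ Ω ∪ boundaryStrip Ω r, |W x| ≤ M) {z y : E} (hz : z ∈ Ω)
    (hy : y ∈ ball 0 r) : |W (z + y) - W z| ≤ 2 * M :=
  (abs_sub _ _).trans (by linarith [hW _ (add_mem_union_boundaryStrip hz hy), hW z (Or.inl hz)])

section Comparison

variable {E : Type*} [NormedAddCommGroup E] [NormedSpace ℝ E] [FiniteDimensional ℝ E]
  [MeasurableSpace E] [BorelSpace E] {μ : Measure E} [μ.IsAddHaarMeasure] {J : ℝ → ℝ}
  {Ω : Set E} {r : ℝ} {U V : E → ℝ}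

lemma exists_advance (hJc : Continuous J) (hJm : StrictMono J) (hr : 0 < r)
    (hUm : Measurable U) (hVm : Measurable V) {M : ℝ}
    (hM : ∀ z ∈ Ω ∪ boundaryStrip Ω r, |U z| ≤ M ∧ |V z| ≤ M)
    (hcmp : ∀ z ∈ Ω, ∫ y in ball 0 r, J (V (z + y) - V z) ∂μ ≤
      ∫ y in ball 0 r, J (U (z + y) - U z) ∂μ)
    (hbdry : ∀ z ∈ boundaryStrip Ω r, U z ≤ V z) {S : ℝ}
    (hS : ∀ z ∈ Ω ∪ boundaryStrip Ω r, U z - V z ≤ S) {ℓ : E →L[ℝ] ℝ} {c : E}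
    (hc : ball c (r / 4) ⊆ ball 0 r) (hℓ : ∀ y ∈ ball c (r / 4), r / 4 < ℓ y) {ε' : ℝ}
    (hε' : 0 < ε') (hε'S : ε' < S) :
    ∃ ε ∈ Ioc 0 ε', ∀ z ∈ {z ∈ Ω | S - ε ≤ U z - V z},
      ∃ z' ∈ {z ∈ Ω | S - ε' ≤ U z - V z}, ℓ z + r / 4 ≤ ℓ z' := by
  have hBfin : μ (ball 0 r) ≠ ⊤ := measure_ball_lt_top.ne
  have hCpos : 0 < μ.real (ball c (r / 4)) := ENNReal.toReal_pos
    (measure_ball_pos μ c (by positivity)).ne' (measure_ne_top_of_subset hc hBfin)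
  have hBpos : 0 < μ.real (ball 0 r) := hCpos.trans_le (measureReal_mono hc hBfin)
  obtain ⟨ε, hε, hsmall⟩ := measureReal_inter_le_of_setIntegral_le hJc hJm (K := 2 * M)
    (δ := ε' / 2) (θ := μ.real (ball c (r / 4)) / (2 * μ.real (ball 0 r))) (by positivity)
    (by positivity) measurableSet_ball hBfin
  refine ⟨min ε (ε' / 2), ⟨by positivity, (min_le_right _ _).trans (half_le_self hε'.le)⟩, ?_⟩
  rintro z ⟨hzΩ, hzS⟩
  have hUinc (y) (hy : y ∈ ball 0 r) := abs_sub_le_of_mem_ball (fun x hx => (hM x hx).1) hzΩ hy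
  have hVinc (y) (hy : y ∈ ball 0 r) := abs_sub_le_of_mem_ball (fun x hx => (hM x hx).2) hzΩ hy
  have hUz : Measurable fun y => U (z + y) := hUm.comp (measurable_const_add z)
  have hVz : Measurable fun y => V (z + y) := hVm.comp (measurable_const_add z)
  set bad := {y | U (z + y) - V (z + y) ≤ S - ε'}
  have hup : ∀ y ∈ ball 0 r, U (z + y) - U z ≤ V (z + y) - V z + ε := fun y hy => by
    linarith [hS _ (add_mem_union_boundaryStrip hzΩ hy), min_le_left ε (ε' / 2)]
  have hdown : ∀ y ∈ ball 0 r ∩ bad, U (z + y) - U z ≤ V (z + y) - V z - ε' / 2 := fun y hy => by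
    linarith [show U (z + y) - V (z + y) ≤ S - ε' from hy.2, min_le_right ε (ε' / 2)]
  have hbad : μ.real (ball 0 r ∩ bad) < μ.real (ball c (r / 4)) := by
    calc μ.real (ball 0 r ∩ bad)
        ≤ μ.real (ball c (r / 4)) / (2 * μ.real (ball 0 r)) * μ.real (ball 0 r) :=
          hsmall _ _ bad (measurableSet_le (hUz.sub hVz) measurable_const)
            (integrableOn_comp_of_abs_le measurableSet_ball hBfin hJc (hVz.sub_const _) hVinc)
            (integrableOn_comp_of_abs_le measurableSet_ball hBfin hJc (hUz.sub_const _) hUinc)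
            hVinc hup hdown (hcmp z hzΩ)
      _ = μ.real (ball c (r / 4)) / 2 := by field_simp
      _ < μ.real (ball c (r / 4)) := half_lt_self hCpos
  obtain ⟨y, hyC, hygood⟩ : ∃ y ∈ ball c (r / 4), y ∉ bad := not_subset.1 fun hsub =>
    (measureReal_mono (subset_inter hc hsub)
      (measure_ne_top_of_subset inter_subset_left hBfin)).not_gt hbad
  have hy : S - ε' < U (z + y) - V (z + y) := lt_of_not_ge hygood
  refine ⟨z + y, ⟨?_, hy.le⟩, by rw [map_add]; linarith [hℓ y hyC]⟩
  exact (add_mem_union_boundaryStrip hzΩ (hc hyC)).resolve_right fun h => by linarith [hbdry _ h]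

theorem le_of_forall_setIntegral_le [Nontrivial E] (hJc : Continuous J) (hJm : StrictMono J)
    (hr : 0 < r) (hΩb : Bornology.IsBounded Ω) (hUm : Measurable U) (hVm : Measurable V)
    (hUb : ∃ M, ∀ x ∈ Ω ∪ boundaryStrip Ω r, |U x| ≤ M)
    (hVb : ∃ M, ∀ x ∈ Ω ∪ boundaryStrip Ω r, |V x| ≤ M)
    (hcmp : ∀ z ∈ Ω, ∫ y in ball 0 r, J (V (z + y) - V z) ∂μ ≤
      ∫ y in ball 0 r, J (U (z + y) - U z) ∂μ)
    (hbdry : ∀ z ∈ boundaryStrip Ω r, U z ≤ V z) :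
    ∀ x ∈ Ω ∪ boundaryStrip Ω r, U x ≤ V x := by
  intro x hx
  by_contra! hxlt
  obtain ⟨MU, hMU⟩ := hUb
  obtain ⟨MV, hMV⟩ := hVb
  have hM : ∀ z ∈ Ω ∪ boundaryStrip Ω r, |U z| ≤ max MU MV ∧ |V z| ≤ max MU MV := fun z hz =>
    ⟨(hMU z hz).trans (le_max_left _ _), (hMV z hz).trans (le_max_right _ _)⟩
  have hbdd : BddAbove ((fun z => U z - V z) '' (Ω ∪ boundaryStrip Ω r)) :=
    ⟨2 * max MU MV, forall_mem_image.2 fun z hz => by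
      linarith [abs_le.1 (hM z hz).1, abs_le.1 (hM z hz).2]⟩
  set S := sSup ((fun z => U z - V z) '' (Ω ∪ boundaryStrip Ω r))
  have hS : ∀ z ∈ Ω ∪ boundaryStrip Ω r, U z - V z ≤ S := fun z hz =>
    le_csSup hbdd (mem_image_of_mem _ hz)
  have hSpos : 0 < S := by linarith [hS x hx]
  obtain ⟨ℓ, c, hc, hℓ⟩ := exists_clm_lt_on_ball_subset_ball E hr
  obtain ⟨R, hR⟩ := hΩb.subset_closedBall 0
  refine false_of_forall_exists_advance (fun ε => {z ∈ Ω | S - ε ≤ U z - V z}) ℓ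
    (R := ‖ℓ‖ * R) (by positivity : 0 < r / 4) (half_pos hSpos) (fun ε z hz => ?_)
    (fun ε hε => ?_) fun ε' hε' => exists_advance hJc hJm hr hUm hVm hM hcmp hbdry hS hc hℓ
      hε'.1 (by linarith [hε'.2])
  · rw [← Real.norm_eq_abs]
    exact (ℓ.le_opNorm z).trans (by gcongr; exact mem_closedBall_zero_iff.1 (hR hz.1))
  · obtain ⟨_, ⟨z, hz, rfl⟩, hlt⟩ :=
      exists_lt_of_lt_csSup ((nonempty_of_mem hx).image _) (sub_lt_self S hε.1)
    exact ⟨z, hz.resolve_right fun h => by linarith [hbdry z h, hε.2], hlt.le⟩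

end Comparison

theorem stmt_14_general (d : ℕ) (p r D : ℝ) (hp : 1 < p) (hd : 1 ≤ d) (hr : 0 < r) (hD : 0 < D)
    (Ω : Set (EuclideanSpace ℝ (Fin d))) (hΩb : Bornology.IsBounded Ω)
    (U V f G : EuclideanSpace ℝ (Fin d) → ℝ)
    (hUm : Measurable U) (hVm : Measurable V)
    (hUb : ∃ M, ∀ x ∈ Ω ∪ {x | x ∉ Ω ∧ infDist x Ω ≤ r}, |U x| ≤ M)
    (hVb : ∃ M, ∀ x ∈ Ω ∪ {x | x ∉ Ω ∧ infDist x Ω ≤ r}, |V x| ≤ M)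
    (hVsuper : ∀ x ∈ Ω,
      -((1 / (D * r ^ p)) * ⨍ y in ball (0 : EuclideanSpace ℝ (Fin d)) r,
          |V (x + y) - V x| ^ (p - 2) * (V (x + y) - V x)) ≥ f x)
    (hUsub : ∀ x ∈ Ω,
      -((1 / (D * r ^ p)) * ⨍ y in ball (0 : EuclideanSpace ℝ (Fin d)) r,
          |U (x + y) - U x| ^ (p - 2) * (U (x + y) - U x)) ≤ f x)
    (hbdry : ∀ x ∈ {x | x ∉ Ω ∧ infDist x Ω ≤ r}, U x ≤ G x ∧ G x ≤ V x) :
    ∀ x ∈ Ω ∪ {x | x ∉ Ω ∧ infDist x Ω ≤ r}, U x ≤ V x := by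
  have : Nonempty (Fin d) := ⟨⟨0, hd⟩⟩
  have hk : 0 < 1 / (D * r ^ p) := by positivity
  have hball : 0 < volume.real (ball (0 : EuclideanSpace ℝ (Fin d)) r) :=
    ENNReal.toReal_pos (measure_ball_pos volume 0 hr).ne' measure_ball_lt_top.ne
  have hcmp : ∀ z ∈ Ω,
      ⨍ y in ball (0 : EuclideanSpace ℝ (Fin d)) r,
          |V (z + y) - V z| ^ (p - 2) * (V (z + y) - V z) ≤
        ⨍ y in ball 0 r, |U (z + y) - U z| ^ (p - 2) * (U (z + y) - U z) := fun z hz =>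
    le_of_mul_le_mul_left (by linarith [hVsuper z hz, hUsub z hz]) hk
  exact le_of_forall_setIntegral_le (μ := volume) (continuous_signedRpow hp)
    (signedRpow_strictMono hp) hr hΩb hUm hVm hUb hVb
    (fun z hz => setIntegral_le_of_setAverage_le hball (hcmp z hz))
    fun z hz => (hbdry z hz).1.trans (hbdry z hz).2

theorem stmt_14 (d : ℕ) (p r D : ℝ) (hp : 1 < p) (hd : 1 ≤ d) (hr : 0 < r) (hD : 0 < D)
    (Ω : Set (EuclideanSpace ℝ (Fin d))) (hΩo : IsOpen Ω) (hΩb : Bornology.IsBounded Ω)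
    (U V f G : EuclideanSpace ℝ (Fin d) → ℝ)
    (hUm : Measurable U) (hVm : Measurable V)
    (hUb : ∃ M, ∀ x ∈ Ω ∪ {x | x ∉ Ω ∧ infDist x Ω ≤ r}, |U x| ≤ M)
    (hVb : ∃ M, ∀ x ∈ Ω ∪ {x | x ∉ Ω ∧ infDist x Ω ≤ r}, |V x| ≤ M)
    (hVsuper : ∀ x ∈ Ω,
      -((1 / (D * r ^ p)) * ⨍ y in ball (0 : EuclideanSpace ℝ (Fin d)) r,
          |V (x + y) - V x| ^ (p - 2) * (V (x + y) - V x)) ≥ f x)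
    (hUsub : ∀ x ∈ Ω,
      -((1 / (D * r ^ p)) * ⨍ y in ball (0 : EuclideanSpace ℝ (Fin d)) r,
          |U (x + y) - U x| ^ (p - 2) * (U (x + y) - U x)) ≤ f x)
    (hbdry : ∀ x ∈ {x | x ∉ Ω ∧ infDist x Ω ≤ r}, U x ≤ G x ∧ G x ≤ V x) :
    ∀ x ∈ Ω ∪ {x | x ∉ Ω ∧ infDist x Ω ≤ r}, U x ≤ V x :=
  stmt_14_general d p r D hp hd hr hD Ω hΩb U V f G hUm hVm hUb hVb hVsuper hUsub hbdry
end

section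
/- Let p ∈ (1,∞), r > 0, D > 0, x ∈ ℝ^d with x ≠ z, and let φ be a bounded measurable function on B_r(x) with sup φ and inf φ finite, and f(x) ∈ ℝ. Then there exists a unique a ∈ [inf_{B_r(x)} φ + J_p^{-1}(D r^p f(x)), sup_{B_r(x)} φ + J_p^{-1}(D r^p f(x))] such that −(1/(D r^p)) ⨍_{B_r} J_p(φ(x+y) − a) dy = f(x). -/
/-!
Since `J_p` is a continuous strictly increasing bijection of `ℝ`, the map
`a ↦ ⨍ J_p(φ(x+y) - a) dy` is continuous and strictly decreasing. Put `c = J_p⁻¹(D r^p f(x))`.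
As `J_p` is monotone and odd, the average is at least `J_p(-c) = -D r^p f(x)` at `a = inf φ + c`
and at most that value at `a = sup φ + c`; the intermediate value theorem gives a solution in
between, and strict monotonicity makes it unique.
-/

open Real MeasureTheory Metric Set Function

noncomputable def jp (p t : ℝ) : ℝ := |t| ^ (p - 2) * t

noncomputable def jpInv (p s : ℝ) : ℝ := |s| ^ ((2 - p) / (p - 1)) * s

lemma abs_rpow_mul_self_of_nonneg {e t : ℝ} (ht : 0 ≤ t) (he : e + 1 ≠ 0) :
    |t| ^ e * t = t ^ (e + 1) := by
  rw [abs_of_nonneg ht, rpow_add_one' ht he]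

section

variable {p : ℝ}

lemma jp_neg (p t : ℝ) : jp p (-t) = -jp p t := by
  simp [jp]

lemma jpInv_neg (p s : ℝ) : jpInv p (-s) = -jpInv p s := by
  simp [jpInv]

lemma jp_of_nonneg (hp : 1 < p) {t : ℝ} (ht : 0 ≤ t) : jp p t = t ^ (p - 1) := by
  rw [jp, abs_rpow_mul_self_of_nonneg ht (by linarith)]
  ring_nf

lemma jpInv_of_nonneg (hp : 1 < p) {s : ℝ} (hs : 0 ≤ s) : jpInv p s = s ^ (p - 1)⁻¹ := by
  have hp₁ : p - 1 ≠ 0 := by linarith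
  have he : (2 - p) / (p - 1) + 1 = (p - 1)⁻¹ := by field_simp; ring
  rw [jpInv, abs_rpow_mul_self_of_nonneg hs (he ▸ inv_ne_zero hp₁), he]

lemma jp_strictMono (hp : 1 < p) : StrictMono (jp p) :=
  strictMono_of_odd_strictMonoOn_nonneg (jp_neg p) fun s hs t ht hst => by
    rw [jp_of_nonneg hp hs, jp_of_nonneg hp ht]
    exact rpow_lt_rpow hs hst (by linarith)

lemma jp_jpInv (hp : 1 < p) (s : ℝ) : jp p (jpInv p s) = s := by
  have h : ∀ s : ℝ, 0 ≤ s → jp p (jpInv p s) = s := fun s hs => by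
    rw [jpInv_of_nonneg hp hs, jp_of_nonneg hp (by positivity), rpow_inv_rpow hs (by linarith)]
  rcases le_total 0 s with hs | hs
  · exact h s hs
  · rw [← neg_neg s, jpInv_neg, jp_neg, h (-s) (by linarith)]

lemma jp_continuous (hp : 1 < p) : Continuous (jp p) :=
  (jp_strictMono hp).monotone.continuous_of_surjective fun s => ⟨jpInv p s, jp_jpInv hp s⟩

end

section

variable {α : Type*} [MeasurableSpace α] {μ : Measure α} {J : ℝ → ℝ} {g : α → ℝ} {m M : ℝ}

lemma abs_comp_sub_le_of_mem_Icc (hJ : Monotone J) {t a lo hi : ℝ} (ht : t ∈ Icc m M)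
    (ha : a ∈ Icc lo hi) : |J (t - a)| ≤ max |J (m - hi)| |J (M - lo)| :=
  abs_le_max_abs_abs (hJ (by linarith [ht.1, ha.2])) (hJ (by linarith [ht.2, ha.1]))

variable [IsFiniteMeasure μ]

lemma le_average_of_ae_le {f : α → ℝ} {C : ℝ} [NeZero μ] (hf : Integrable f μ)
    (h : ∀ᵐ y ∂μ, C ≤ f y) : C ≤ ⨍ y, f y ∂μ := by
  rw [average_eq, smul_eq_mul, le_inv_mul_iff₀ measureReal_univ_pos, ← smul_eq_mul,
    ← integral_const]
  exact integral_mono_ae (integrable_const C) hf h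

lemma average_le_of_ae_le {f : α → ℝ} {C : ℝ} [NeZero μ] (hf : Integrable f μ)
    (h : ∀ᵐ y ∂μ, f y ≤ C) : ⨍ y, f y ∂μ ≤ C := by
  rw [average_eq, smul_eq_mul, inv_mul_le_iff₀ measureReal_univ_pos, ← smul_eq_mul,
    ← integral_const]
  exact integral_mono_ae hf (integrable_const C) h

variable (hJc : Continuous J) (hg : AEMeasurable g μ) (hgM : ∀ᵐ y ∂μ, g y ∈ Icc m M)
include hJc hg hgM

lemma integrable_comp_sub (hJ : Monotone J) (a : ℝ) : Integrable (fun y => J (g y - a)) μ :=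
  .of_bound (hJc.comp_aestronglyMeasurable (hg.sub_const a).aestronglyMeasurable) _
    (hgM.mono fun _ hy => abs_comp_sub_le_of_mem_Icc hJ hy (left_mem_Icc.2 le_rfl))

lemma continuous_integral_comp_sub (hJ : Monotone J) :
    Continuous fun a => ∫ y, J (g y - a) ∂μ := by
  refine continuous_iff_continuousAt.2 fun a₀ => continuousAt_of_dominated
    (bound := fun _ => max |J (m - (a₀ + 1))| |J (M - (a₀ - 1))|)
    (.of_forall fun a => (integrable_comp_sub hJc hg hgM hJ a).aestronglyMeasurable) ?_
    (integrable_const _)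
    (.of_forall fun _ => (hJc.comp (continuous_const.sub continuous_id)).continuousAt)
  filter_upwards [Icc_mem_nhds (sub_one_lt a₀) (lt_add_one a₀)] with a ha
  filter_upwards [hgM] with y hy using abs_comp_sub_le_of_mem_Icc hJ hy ha

lemma strictAnti_integral_comp_sub [NeZero μ] (hJ : StrictMono J) :
    StrictAnti fun a => ∫ y, J (g y - a) ∂μ := by
  intro a b hab
  have hint := integrable_comp_sub hJc hg hgM hJ.monotone
  have hpos : ∀ y, 0 < J (g y - a) - J (g y - b) := fun y => sub_pos.2 (hJ (by linarith))
  have hsupp : support (fun y => J (g y - a) - J (g y - b)) = univ :=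
    eq_univ_of_forall fun y => (hpos y).ne'
  have : 0 < ∫ y, (J (g y - a) - J (g y - b)) ∂μ := by
    rw [integral_pos_iff_support_of_nonneg_ae (.of_forall fun y => (hpos y).le)
      ((hint a).sub (hint b)), hsupp]
    exact Measure.measure_univ_pos.2 (NeZero.ne μ)
  rw [integral_sub (hint a) (hint b)] at this
  exact sub_pos.1 this

theorem existsUnique_average_comp_sub_eq [NeZero μ] (hJ : StrictMono J) (c : ℝ) :
    ∃! a, a ∈ Icc (m + c) (M + c) ∧ ⨍ y, J (g y - a) ∂μ = J (-c) := by
  set F := fun a => ⨍ y, J (g y - a) ∂μ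
  have hint := integrable_comp_sub hJc hg hgM hJ.monotone
  have hF : StrictAnti F := by
    intro a b hab
    simp only [F, average_eq, smul_eq_mul]
    exact mul_lt_mul_of_pos_left (strictAnti_integral_comp_sub hJc hg hgM hJ hab)
      (inv_pos.2 measureReal_univ_pos)
  have hFc : Continuous F := by
    simp only [F, average_eq, smul_eq_mul]
    exact continuous_const.mul (continuous_integral_comp_sub hJc hg hgM hJ.monotone)
  have hFM : F (M + c) ≤ J (-c) := average_le_of_ae_le (hint _) <|
    hgM.mono fun y hy => hJ.monotone (by linarith [hy.2])
  have hFm : J (-c) ≤ F (m + c) := le_average_of_ae_le (hint _) <|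
    hgM.mono fun y hy => hJ.monotone (by linarith [hy.1])
  have hmM : m + c ≤ M + c := by
    obtain ⟨y, hy⟩ := hgM.exists
    linarith [hy.1, hy.2]
  obtain ⟨a, ha, hFa⟩ := intermediate_value_Icc' hmM hFc.continuousOn ⟨hFM, hFm⟩
  exact ⟨a, ⟨ha, hFa⟩, fun b hb => hF.injective (hb.2.trans hFa.symm)⟩

end

theorem stmt_15 (d : ℕ) (p r D fx : ℝ) (hp : 1 < p) (hr : 0 < r) (hD : 0 < D)
    (x : EuclideanSpace ℝ (Fin d)) (φ : EuclideanSpace ℝ (Fin d) → ℝ)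
    (hφm : Measurable φ)
    (hbdd : BddAbove (φ '' ball x r)) (hbdd' : BddBelow (φ '' ball x r)) :
    ∃! a : ℝ,
      a ∈ Set.Icc
          (sInf (φ '' ball x r) + |D * r ^ p * fx| ^ ((2 - p) / (p - 1)) * (D * r ^ p * fx))
          (sSup (φ '' ball x r) + |D * r ^ p * fx| ^ ((2 - p) / (p - 1)) * (D * r ^ p * fx)) ∧
        -((1 / (D * r ^ p)) * ⨍ y in ball (0 : EuclideanSpace ℝ (Fin d)) r,
            |φ (x + y) - a| ^ (p - 2) * (φ (x + y) - a)) = fx := by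
  have hK : 0 < D * r ^ p := by positivity
  have : IsFiniteMeasure (volume.restrict (ball (0 : EuclideanSpace ℝ (Fin d)) r)) :=
    isFiniteMeasure_restrict.2 measure_ball_lt_top.ne
  have : NeZero (volume.restrict (ball (0 : EuclideanSpace ℝ (Fin d)) r)) :=
    ⟨mt Measure.restrict_eq_zero.1 (measure_ball_pos volume 0 hr).ne'⟩
  have hφx : ∀ᵐ y ∂volume.restrict (ball 0 r),
      φ (x + y) ∈ Icc (sInf (φ '' ball x r)) (sSup (φ '' ball x r)) := by
    refine ae_restrict_of_forall_mem measurableSet_ball fun y hy => ?_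
    have hxy : φ (x + y) ∈ φ '' ball x r := mem_image_of_mem φ (by simpa [mem_ball_iff_norm] using hy)
    exact ⟨csInf_le hbdd' hxy, le_csSup hbdd hxy⟩
  have hiff : ∀ A : ℝ, A = -(D * r ^ p * fx) ↔ -((1 / (D * r ^ p)) * A) = fx := fun A => by
    constructor <;> intro h
    · rw [h]; field_simp
    · rw [← h]; field_simp
  have h := existsUnique_average_comp_sub_eq (g := fun y => φ (x + y)) (jp_continuous hp)
    (hφm.comp (measurable_const_add x)).aemeasurable hφx (jp_strictMono hp)
    (jpInv p (D * r ^ p * fx))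
  rw [jp_neg, jp_jpInv hp] at h
  exact (existsUnique_congr fun a => and_congr_right fun _ => hiff _).1 h
end

section
/- Let n ≥ 1 be an integer, ε ∈ ℝ with |ε| < 1/(2n+1), and β > 0. Define the map 𝒜 : ℂ → ℂ in polar coordinates by 𝒜(re^{iθ}) = r^β e^{-inθ}(e^{i(n+1)θ} + ε e^{-i(n+1)θ}). Then |𝒜(re^{iθ})| = r^β √(1 + ε² + 2ε cos(2(n+1)θ)), and the Jacobian determinant of 𝒜 (as a map ℝ² → ℝ²) at re^{iθ} with r > 0 equals β r^{2(β−1)}(1 − (2n+1)ε² − 2nε cos(2(n+1)θ)), which is strictly positive. -/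
open Real Complex ComplexConjugate

/-!
The map is positively homogeneous of degree `β`: `𝒜 (s e^{iφ}) = s ^ β g(φ)` with
`g(φ) = e^{iφ} + ε e^{-i(2n+1)φ}`. Hence its differential `L` at `z = r e^{iθ}` sends `z` to
`β r ^ β g(θ)` (Euler's relation) and `iz` to `r ^ β g'(θ)` (rotation), and since
`det L * |z|² = Im (conj (L z) * L (i z))` for every real-linear `L : ℂ → ℂ`, the Jacobian
is `β r ^ (2(β-1)) Im (conj g g')`, which is computed on the unit circle using `ū = u⁻¹`.
Differentiability comes from the Cartesian form `𝒜 w = ‖w‖ ^ β g(w / ‖w‖)`, valid away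
from `0`.
-/

theorem Complex.det_mul_normSq_eq_im (L : ℂ →ₗ[ℝ] ℂ) (z : ℂ) :
    LinearMap.det L * normSq z = (conj (L z) * L (I * z)).im := by
  rw [← LinearMap.det_toMatrix Complex.basisOneI, Matrix.det_fin_two]
  have hLz : L z = z.re • L 1 + z.im • L I := by
    rw [← map_smul, ← map_smul, ← map_add]; congr 1; simp
  have hLIz : L (I * z) = (-z.im) • L 1 + z.re • L I := by
    rw [← map_smul, ← map_smul, ← map_add]; congr 1; simp [Complex.ext_iff]
  rw [hLz, hLIz]
  simp [LinearMap.toMatrix_apply, Complex.normSq_apply]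
  ring

section PolarForm

variable {f : ℂ → ℂ} {β : ℝ}

theorem differentiableAt_of_polar_form {h : ℂ → ℂ}
    (hf : ∀ s : ℝ, 0 < s → ∀ φ : ℝ,
      f (s * cexp (φ * I)) = (s ^ β : ℝ) * h (cexp (φ * I)))
    {z : ℂ} (hz : z ≠ 0) (hh : DifferentiableAt ℝ h (‖z‖⁻¹ • z)) :
    DifferentiableAt ℝ f z := by
  have hcartesian : ∀ w : ℂ, w ≠ 0 → f w = ‖w‖ ^ β • h (‖w‖⁻¹ • w) := by
    intro w hw
    have hw' : (0 : ℝ) < ‖w‖ := norm_pos_iff.2 hw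
    have hunit : ‖w‖⁻¹ • w = cexp (arg w * I) := by
      rw [real_smul, ofReal_inv, inv_mul_eq_iff_eq_mul₀ (by exact_mod_cast hw'.ne'),
        norm_mul_exp_arg_mul_I]
    rw [hunit, real_smul, ← hf _ hw', norm_mul_exp_arg_mul_I]
  have hnorm : DifferentiableAt ℝ (fun w : ℂ => ‖w‖) z := differentiableAt_id.norm ℝ hz
  have hz' : ‖z‖ ≠ 0 := norm_ne_zero_iff.2 hz
  have hunit : DifferentiableAt ℝ (fun w : ℂ => ‖w‖⁻¹ • w) z := by
    fun_prop (disch := assumption)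
  have hhunit := DifferentiableAt.comp (g := h) (f := fun w : ℂ => ‖w‖⁻¹ • w) z hh hunit
  have hF : DifferentiableAt ℝ (fun w : ℂ => ‖w‖ ^ β • h (‖w‖⁻¹ • w)) z := by
    fun_prop (disch := assumption)
  refine hF.congr_of_eventuallyEq ?_
  filter_upwards [isOpen_compl_singleton.mem_nhds hz] with w hw using hcartesian w hw

variable {g : ℝ → ℂ} {r θ : ℝ} {L : ℂ →L[ℝ] ℂ}

theorem HasFDerivAt.apply_self_eq_of_polar_form (hL : HasFDerivAt f L (r * cexp (θ * I)))
    (hr : 0 < r)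
    (hf : ∀ s : ℝ, 0 < s → ∀ φ : ℝ, f (s * cexp (φ * I)) = (s ^ β : ℝ) * g φ) :
    L (r * cexp (θ * I)) = (β * r ^ β : ℝ) * g θ := by
  set z : ℂ := r * cexp (θ * I)
  have hline : HasDerivAt (fun t : ℝ => (t : ℂ) * z) z 1 := by
    simpa using (hasDerivAt_id (1 : ℝ)).ofReal_comp.mul_const z
  have hrpow : HasDerivAt (fun t : ℝ => ((t ^ β * r ^ β : ℝ) : ℂ) * g θ)
      ((β * r ^ β : ℝ) * g θ) 1 := by
    simpa using ((hasDerivAt_rpow_const (x := 1) (p := β) (Or.inl one_ne_zero)).mul_const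
      (r ^ β)).ofReal_comp.mul_const (g θ)
  refine (hL.comp_hasDerivAt_of_eq (1 : ℝ) hline (by simp)).unique
    (hrpow.congr_of_eventuallyEq ?_)
  filter_upwards [lt_mem_nhds one_pos] with t ht
  simp only [Function.comp_apply, z]
  rw [← mul_assoc, ← ofReal_mul, hf _ (mul_pos ht hr), mul_rpow ht.le hr.le]

theorem HasFDerivAt.apply_I_mul_eq_of_polar_form {g' : ℂ}
    (hL : HasFDerivAt f L (r * cexp (θ * I))) (hr : 0 < r)
    (hf : ∀ s : ℝ, 0 < s → ∀ φ : ℝ, f (s * cexp (φ * I)) = (s ^ β : ℝ) * g φ)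
    (hg : HasDerivAt g g' θ) :
    L (I * (r * cexp (θ * I))) = (r ^ β : ℝ) * g' := by
  set z : ℂ := r * cexp (θ * I)
  have hrot : HasDerivAt (fun t : ℝ => cexp (t * I) * z) (I * z) 0 := by
    simpa using ((hasDerivAt_id (0 : ℝ)).ofReal_comp.mul_const I).cexp.mul_const z
  have hshift :
      HasDerivAt (fun t : ℝ => ((r ^ β : ℝ) : ℂ) * g (θ + t)) ((r ^ β : ℝ) * g') 0 :=
    (HasDerivAt.comp_const_add θ 0 (by rwa [add_zero])).const_mul _
  refine (hL.comp_hasDerivAt_of_eq (0 : ℝ) hrot (by simp)).unique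
    (hshift.congr_of_eventuallyEq (Filter.Eventually.of_forall fun t => ?_))
  simp only [Function.comp_apply, z]
  rw [← mul_assoc, mul_comm (cexp _), mul_assoc, ← Complex.exp_add, ← hf r hr]
  push_cast; ring_nf

theorem det_fderiv_of_polar_form {g' : ℂ} (hr : 0 < r)
    (hf : ∀ s : ℝ, 0 < s → ∀ φ : ℝ, f (s * cexp (φ * I)) = (s ^ β : ℝ) * g φ)
    (hfd : DifferentiableAt ℝ f (r * cexp (θ * I))) (hg : HasDerivAt g g' θ) :
    LinearMap.det (fderiv ℝ f (r * cexp (θ * I)) : ℂ →ₗ[ℝ] ℂ)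
      = β * r ^ (2 * (β - 1)) * (conj (g θ) * g').im := by
  have hL := hfd.hasFDerivAt
  have hnormSq : normSq (r * cexp (θ * I)) = r ^ 2 := by
    simp [normSq_eq_norm_sq, abs_of_pos hr]
  have hpow : r ^ β * r ^ β = r ^ (2 * (β - 1)) * r ^ 2 := by
    rw [← rpow_add hr, ← rpow_natCast, ← rpow_add hr]; push_cast; ring_nf
  have hdet := Complex.det_mul_normSq_eq_im (fderiv ℝ f (r * cexp (θ * I))) (r * cexp (θ * I))
  rw [ContinuousLinearMap.coe_coe, hL.apply_self_eq_of_polar_form hr hf,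
    hL.apply_I_mul_eq_of_polar_form hr hf hg, hnormSq,
    show conj (((β * r ^ β : ℝ) : ℂ) * g θ) * ((r ^ β : ℝ) * g')
      = ((β * (r ^ β * r ^ β) : ℝ) : ℂ) * (conj (g θ) * g') by
        simp only [map_mul, conj_ofReal]; push_cast; ring,
    im_ofReal_mul, hpow] at hdet
  exact mul_right_cancel₀ (pow_ne_zero 2 hr.ne') (by linarith)

end PolarForm

def hodographProfile (m : ℕ) (ε : ℝ) (u : ℂ) : ℂ := u + ε * conj u ^ m

section HodographProfile

variable {m : ℕ} {ε : ℝ} {u : ℂ}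

theorem conj_pow_mul_pow_of_norm_eq_one (hu : ‖u‖ = 1) (k : ℕ) : conj u ^ k * u ^ k = 1 := by
  rw [← mul_pow, conj_mul', hu]; norm_num

theorem normSq_hodographProfile (hu : ‖u‖ = 1) :
    normSq (hodographProfile m ε u) = 1 + ε ^ 2 + 2 * ε * (u ^ (m + 1)).re := by
  apply ofReal_injective
  rw [normSq_eq_conj_mul_self]
  push_cast
  rw [re_eq_add_conj]
  simp only [hodographProfile, map_add, map_mul, map_pow, conj_conj, conj_ofReal]
  linear_combination conj_pow_mul_pow_of_norm_eq_one hu 1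
    + ε ^ 2 * conj_pow_mul_pow_of_norm_eq_one hu m

theorem im_conj_hodographProfile_mul (hu : ‖u‖ = 1) :
    (conj (hodographProfile m ε u) * (I * (u - m * ε * conj u ^ m))).im
      = 1 - m * ε ^ 2 + (1 - m) * ε * (u ^ (m + 1)).re := by
  have hexpand : conj (hodographProfile m ε u) * (I * (u - m * ε * conj u ^ m))
      = I * (((1 - m * ε ^ 2 : ℝ) : ℂ) + ε * u ^ (m + 1) - m * ε * conj (u ^ (m + 1))) := by
    simp only [hodographProfile, map_add, map_mul, map_pow, conj_conj, conj_ofReal]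
    push_cast
    linear_combination I * conj_pow_mul_pow_of_norm_eq_one hu 1
      - m * ε ^ 2 * I * conj_pow_mul_pow_of_norm_eq_one hu m
  rw [hexpand, I_mul_im]
  generalize u ^ (m + 1) = w
  simp only [add_re, sub_re, ofReal_re, conj_re, mul_re, mul_im, natCast_re, natCast_im,
    ofReal_im]
  ring

theorem hasDerivAt_hodographProfile_exp (m : ℕ) (ε θ : ℝ) :
    HasDerivAt (fun φ : ℝ => hodographProfile m ε (cexp (φ * I)))
      (I * (cexp (θ * I) - m * ε * conj (cexp (θ * I)) ^ m)) θ := by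
  have hexp : HasDerivAt (fun φ : ℝ => cexp (φ * I)) (cexp (θ * I) * I) θ := by
    simpa using ((hasDerivAt_id θ).ofReal_comp.mul_const I).cexp
  refine (hexp.add ((hexp.star.pow m).const_mul (ε : ℂ))).congr_deriv ?_
  rcases m with _ | k
  · simp [mul_comm]
  · simp only [star_def, map_mul, conj_I, Nat.cast_succ, Nat.add_sub_cancel, pow_succ]
    ring

end HodographProfile

theorem re_exp_mul_I_pow (θ : ℝ) (k : ℕ) : (cexp (θ * I) ^ k).re = Real.cos (k * θ) := by
  rw [← Complex.exp_nat_mul, ← mul_assoc, ← ofReal_natCast, ← ofReal_mul,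
    exp_ofReal_mul_I_re]

theorem exp_mul_exp_add_exp_eq_hodographProfile (n : ℕ) (ε θ : ℝ) :
    cexp (-(n : ℂ) * θ * I) *
        (cexp (((n : ℂ) + 1) * θ * I) + ε * cexp (-((n : ℂ) + 1) * θ * I))
      = hodographProfile (2 * n + 1) ε (cexp (θ * I)) := by
  have hpow (k : ℕ) (x : ℂ) : cexp (k * x) = cexp x ^ k := Complex.exp_nat_mul x k
  have hconj : conj (cexp (θ * I)) = cexp (-(θ * I)) := by rw [← exp_conj]; simp
  have hinv : (cexp (θ * I) * cexp (-(θ * I))) ^ n = 1 := by rw [← Complex.exp_add]; simp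
  rw [hodographProfile, hconj, show -(n : ℂ) * θ * I = n * -(θ * I) by ring,
    show ((n : ℂ) + 1) * θ * I = ((n + 1 : ℕ) : ℂ) * (θ * I) by push_cast; ring,
    show -((n : ℂ) + 1) * θ * I = ((n + 1 : ℕ) : ℂ) * -(θ * I) by push_cast; ring,
    hpow, hpow, hpow]
  linear_combination cexp (θ * I) * hinv

theorem one_sub_mul_sq_sub_mul_pos {a ε c : ℝ} (ha : 0 ≤ a) (hε : |ε| < 1 / (2 * a + 1))
    (hc : |c| ≤ 1) : 0 < 1 - (2 * a + 1) * ε ^ 2 - 2 * a * ε * c := by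
  have hε' : (2 * a + 1) * |ε| < 1 := by rwa [lt_div_iff₀ (by positivity), mul_comm] at hε
  have hεc : ε * c ≤ |ε| := by
    calc ε * c ≤ |ε * c| := le_abs_self _
      _ = |ε| * |c| := abs_mul ε c
      _ ≤ |ε| := mul_le_of_le_one_right (abs_nonneg ε) hc
  have hsq : (2 * a + 1) * ε ^ 2 ≤ |ε| := by
    rw [← sq_abs, sq, ← mul_assoc]
    exact mul_le_of_le_one_left (abs_nonneg ε) hε'.le
  nlinarith

theorem stmt_17_general (n : ℕ) (ε β : ℝ) (hε : |ε| < 1 / (2 * (n : ℝ) + 1))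
    (hβ : 0 < β) (𝒜 : ℂ → ℂ)
    (h𝒜 : ∀ r : ℝ, 0 < r → ∀ θ : ℝ,
      𝒜 (r * Complex.exp (θ * Complex.I))
        = ((r ^ β : ℝ) : ℂ) * Complex.exp (-(n : ℂ) * θ * Complex.I) *
            (Complex.exp (((n : ℂ) + 1) * θ * Complex.I) +
              (ε : ℂ) * Complex.exp (-((n : ℂ) + 1) * θ * Complex.I))) :
    ∀ r : ℝ, 0 < r → ∀ θ : ℝ,
      ‖𝒜 (r * Complex.exp (θ * Complex.I))‖
          = r ^ β * Real.sqrt (1 + ε ^ 2 + 2 * ε * Real.cos (2 * ((n : ℝ) + 1) * θ)) ∧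
        LinearMap.det (fderiv ℝ 𝒜 (r * Complex.exp (θ * Complex.I)) : ℂ →ₗ[ℝ] ℂ)
          = β * r ^ (2 * (β - 1)) *
              (1 - (2 * (n : ℝ) + 1) * ε ^ 2 - 2 * (n : ℝ) * ε * Real.cos (2 * ((n : ℝ) + 1) * θ)) ∧
        0 < β * r ^ (2 * (β - 1)) *
              (1 - (2 * (n : ℝ) + 1) * ε ^ 2 - 2 * (n : ℝ) * ε * Real.cos (2 * ((n : ℝ) + 1) * θ)) := by
  have hpolar : ∀ s : ℝ, 0 < s → ∀ φ : ℝ,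
      𝒜 (s * cexp (φ * I)) = (s ^ β : ℝ) * hodographProfile (2 * n + 1) ε (cexp (φ * I)) :=
    fun s hs φ => by rw [h𝒜 s hs φ, mul_assoc, exp_mul_exp_add_exp_eq_hodographProfile]
  intro r hr θ
  have hu : ‖cexp (θ * I)‖ = 1 := norm_exp_ofReal_mul_I θ
  have hcos : (cexp (θ * I) ^ (2 * n + 1 + 1)).re = Real.cos (2 * ((n : ℝ) + 1) * θ) := by
    rw [re_exp_mul_I_pow]; push_cast; ring_nf
  have hz : (r : ℂ) * cexp (θ * I) ≠ 0 := mul_ne_zero (ofReal_ne_zero.2 hr.ne') (exp_ne_zero _)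
  refine ⟨?_, ?_, ?_⟩
  · rw [hpolar r hr θ, norm_mul, norm_real, norm_of_nonneg (rpow_nonneg hr.le β), norm_def,
      normSq_hodographProfile hu, hcos]
  · rw [det_fderiv_of_polar_form hr hpolar
      (differentiableAt_of_polar_form hpolar hz (by unfold hodographProfile; fun_prop))
      (hasDerivAt_hodographProfile_exp _ ε θ), im_conj_hodographProfile_mul hu, hcos]
    push_cast; ring
  · exact mul_pos (mul_pos hβ (rpow_pos_of_pos hr _))
      (one_sub_mul_sq_sub_mul_pos n.cast_nonneg hε (abs_cos_le_one _))

theorem stmt_17 (n : ℕ) (hn : 1 ≤ n) (ε β : ℝ) (hε : |ε| < 1 / (2 * (n : ℝ) + 1))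
    (hβ : 0 < β) (𝒜 : ℂ → ℂ)
    (h𝒜 : ∀ r : ℝ, 0 < r → ∀ θ : ℝ,
      𝒜 (r * Complex.exp (θ * Complex.I))
        = ((r ^ β : ℝ) : ℂ) * Complex.exp (-(n : ℂ) * θ * Complex.I) *
            (Complex.exp (((n : ℂ) + 1) * θ * Complex.I) +
              (ε : ℂ) * Complex.exp (-((n : ℂ) + 1) * θ * Complex.I))) :
    ∀ r : ℝ, 0 < r → ∀ θ : ℝ,
      ‖𝒜 (r * Complex.exp (θ * Complex.I))‖
          = r ^ β * Real.sqrt (1 + ε ^ 2 + 2 * ε * Real.cos (2 * ((n : ℝ) + 1) * θ)) ∧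
        LinearMap.det (fderiv ℝ 𝒜 (r * Complex.exp (θ * Complex.I)) : ℂ →ₗ[ℝ] ℂ)
          = β * r ^ (2 * (β - 1)) *
              (1 - (2 * (n : ℝ) + 1) * ε ^ 2 - 2 * (n : ℝ) * ε * Real.cos (2 * ((n : ℝ) + 1) * θ)) ∧
        0 < β * r ^ (2 * (β - 1)) *
              (1 - (2 * (n : ℝ) + 1) * ε ^ 2 - 2 * (n : ℝ) * ε * Real.cos (2 * ((n : ℝ) + 1) * θ)) :=
  stmt_17_general n ε β hε hβ 𝒜 h𝒜
end

section
/- Let p ∈ (1,2) and a, b ∈ ℝ with a ≠ 0 and |b| < |a|/2, and δ ∈ (0, p−1). Then |J_p(a+b) − J_p(a) − J_p'(a)b| ≤ C(|a+b|^{p-2-δ} + |a|^{p-2-δ})|b|^{1+δ}, where J_p(t) = |t|^{p-2}t and J_p'(a) = (p−1)|a|^{p-2}, and C depends only on p and δ. -/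
/-!
Since `J_p` is odd we may assume `a > 0`; then `a + b ≥ a / 2 > 0` and `J_p(t) = t ^ (p - 1)` on
the segment between `a` and `a + b`. The first-order Taylor remainder of `t ^ (p - 1)` is bounded by
the Lipschitz constant `(p - 1) (2 - p) (a / 2) ^ (p - 3)` of its derivative times `b ^ 2`, and
`|b| ≤ a / 2` trades `|b| ^ (1 - δ)` for `(a / 2) ^ (1 - δ)`, leaving `|a| ^ (p - 2 - δ) |b| ^ (1 + δ)`.
-/

open Real Set

theorem abs_sub_sub_mul_le_of_abs_deriv_sub_le {f f' : ℝ → ℝ} {s : Set ℝ} {K x y : ℝ}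
    (hs : Convex ℝ s) (hf : ∀ z ∈ s, HasDerivWithinAt f (f' z) s z) (hK : 0 ≤ K)
    (hf' : ∀ z ∈ s, |f' z - f' x| ≤ K * |z - x|) (hx : x ∈ s) (hy : y ∈ s) :
    |f y - f x - f' x * (y - x)| ≤ K * (y - x) ^ 2 := by
  have hxy : uIcc x y ⊆ s := hs.ordConnected.uIcc_subset hx hy
  have hg : ∀ z ∈ uIcc x y, HasDerivWithinAt (fun z => f z - z * f' x) (f' z - f' x) (uIcc x y) z :=
    fun z hz => ((hf z (hxy hz)).mono hxy).sub (hasDerivAt_mul_const (f' x)).hasDerivWithinAt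
  have hg' : ∀ z ∈ uIcc x y, ‖f' z - f' x‖ ≤ K * |y - x| := fun z hz =>
    (hf' z (hxy hz)).trans (mul_le_mul_of_nonneg_left (abs_sub_left_of_mem_uIcc hz) hK)
  have := (convex_uIcc x y).norm_image_sub_le_of_norm_hasDerivWithin_le hg hg'
    left_mem_uIcc right_mem_uIcc
  rw [Real.norm_eq_abs, Real.norm_eq_abs] at this
  calc |f y - f x - f' x * (y - x)| = |f y - y * f' x - (f x - x * f' x)| := by ring_nf
    _ ≤ K * |y - x| * |y - x| := this
    _ = K * (y - x) ^ 2 := by rw [mul_assoc, abs_mul_abs_self, sq]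

theorem abs_rpow_sub_rpow_le {r c x y : ℝ} (hr : r ≤ 1) (hc : 0 < c) (hx : c ≤ x) (hy : c ≤ y) :
    |x ^ r - y ^ r| ≤ |r| * c ^ (r - 1) * |x - y| := by
  have hderiv : ∀ z ∈ Ici c, HasDerivWithinAt (fun z => z ^ r) (r * z ^ (r - 1)) (Ici c) z :=
    fun z hz => (hasDerivAt_rpow_const (Or.inl (hc.trans_le hz).ne')).hasDerivWithinAt
  have hbound : ∀ z ∈ Ici c, ‖r * z ^ (r - 1)‖ ≤ |r| * c ^ (r - 1) := fun z hz => by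
    rw [Real.norm_eq_abs, abs_mul, abs_of_nonneg (rpow_nonneg (hc.trans_le hz).le _)]
    exact mul_le_mul_of_nonneg_left (rpow_le_rpow_of_nonpos hc hz (by linarith)) (abs_nonneg r)
  exact (convex_Ici c).norm_image_sub_le_of_norm_hasDerivWithin_le hderiv hbound hy hx

theorem abs_rpow_add_sub_rpow_sub_mul_le {r a b : ℝ} (hr : r ≤ 2) (ha : 0 < a) (hb : |b| ≤ a / 2) :
    |(a + b) ^ r - a ^ r - r * a ^ (r - 1) * b| ≤ |r * (r - 1)| * (a / 2) ^ (r - 2) * b ^ 2 := by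
  have hc : 0 < a / 2 := half_pos ha
  have hderiv : ∀ z ∈ Ici (a / 2),
      HasDerivWithinAt (fun z => z ^ r) (r * z ^ (r - 1)) (Ici (a / 2)) z :=
    fun z hz => (hasDerivAt_rpow_const (Or.inl (hc.trans_le hz).ne')).hasDerivWithinAt
  have hlip : ∀ z ∈ Ici (a / 2), |r * z ^ (r - 1) - r * a ^ (r - 1)| ≤
      |r * (r - 1)| * (a / 2) ^ (r - 2) * |z - a| := fun z hz => by
    have := abs_rpow_sub_rpow_le (r := r - 1) (by linarith) hc hz (by linarith : a / 2 ≤ a)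
    rw [show r - 1 - 1 = r - 2 by ring] at this
    rw [← mul_sub, abs_mul, abs_mul, mul_assoc, mul_assoc]
    exact mul_le_mul_of_nonneg_left (by linarith) (abs_nonneg r)
  have hab : a + b ∈ Ici (a / 2) := by
    rw [mem_Ici]; linarith [neg_abs_le b]
  have := abs_sub_sub_mul_le_of_abs_deriv_sub_le (convex_Ici _) hderiv (by positivity) hlip
    (by rw [mem_Ici]; linarith) hab
  simpa only [add_sub_cancel_left, mul_assoc] using this

theorem abs_abs_rpow_mul_add_sub_sub_le {p a b : ℝ} (hp : p ≤ 3) (ha : a ≠ 0)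
    (hb : |b| ≤ |a| / 2) :
    |(|a + b| ^ (p - 2) * (a + b)) - |a| ^ (p - 2) * a - (p - 1) * |a| ^ (p - 2) * b|
      ≤ |(p - 1) * (p - 2)| * (|a| / 2) ^ (p - 3) * b ^ 2 := by
  wlog hpos : 0 < a generalizing a b
  · have h := this (a := -a) (b := -b) (neg_ne_zero.mpr ha) (by rwa [abs_neg, abs_neg])
      (by linarith [ha.lt_or_gt.resolve_right hpos])
    rw [← neg_add, abs_neg, abs_neg, neg_sq] at h
    convert h using 1
    rw [← abs_neg]
    ring_nf
  have hab : 0 < a + b := by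
    rw [abs_of_pos hpos] at hb; linarith [neg_abs_le b]
  have hJ : ∀ t : ℝ, 0 < t → |t| ^ (p - 2) * t = t ^ (p - 1) := fun t ht => by
    rw [abs_of_pos ht, ← rpow_add_one ht.ne']; ring_nf
  rw [hJ _ hab, hJ _ hpos, abs_of_pos hpos]
  have := abs_rpow_add_sub_rpow_sub_mul_le (r := p - 1) (by linarith) hpos
    (by rwa [abs_of_pos hpos] at hb)
  rwa [show p - 1 - 1 = p - 2 by ring, show p - 1 - 2 = p - 3 by ring] at this

theorem rpow_mul_sq_le_of_abs_le {c b s δ : ℝ} (hc : 0 < c) (hb : |b| ≤ c) (hδ : δ ≤ 1) :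
    c ^ s * b ^ 2 ≤ c ^ (s + 1 - δ) * |b| ^ (1 + δ) := by
  have hsplit : b ^ 2 = |b| ^ (1 + δ) * |b| ^ (1 - δ) := by
    rw [← rpow_add' (abs_nonneg b) (by norm_num), show 1 + δ + (1 - δ) = ((2 : ℕ) : ℝ) by
      push_cast; ring, rpow_natCast, sq_abs]
  have hmono : |b| ^ (1 - δ) ≤ c ^ (1 - δ) := rpow_le_rpow (abs_nonneg b) hb (by linarith)
  calc c ^ s * b ^ 2 = c ^ s * |b| ^ (1 + δ) * |b| ^ (1 - δ) := by rw [hsplit, mul_assoc]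
    _ ≤ c ^ s * |b| ^ (1 + δ) * c ^ (1 - δ) := by gcongr
    _ = c ^ (s + 1 - δ) * |b| ^ (1 + δ) := by
      rw [show s + 1 - δ = s + (1 - δ) by ring, rpow_add hc]; ring

theorem stmt_19_general (p δ : ℝ) (hp1 : 1 < p) (hp2 : p < 2) (hδ : δ < p - 1) :
    ∃ C > 0, ∀ a b : ℝ, a ≠ 0 → |b| < |a| / 2 →
      |(|a + b| ^ (p - 2) * (a + b)) - |a| ^ (p - 2) * a - (p - 1) * |a| ^ (p - 2) * b|
        ≤ C * (|a + b| ^ (p - 2 - δ) + |a| ^ (p - 2 - δ)) * |b| ^ (1 + δ) := by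
  have hp : 0 < (p - 1) * (2 - p) := mul_pos (by linarith) (by linarith)
  refine ⟨(p - 1) * (2 - p) / 2 ^ (p - 2 - δ), by positivity, fun a b ha hb => ?_⟩
  have hc : 0 < |a| / 2 := half_pos (abs_pos.mpr ha)
  calc _ ≤ |(p - 1) * (p - 2)| * (|a| / 2) ^ (p - 3) * b ^ 2 :=
        abs_abs_rpow_mul_add_sub_sub_le (by linarith) ha hb.le
    _ ≤ (p - 1) * (2 - p) * ((|a| / 2) ^ (p - 2 - δ) * |b| ^ (1 + δ)) := by
        rw [show |(p - 1) * (p - 2)| = (p - 1) * (2 - p) by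
          rw [abs_of_neg (by nlinarith)]; ring,
          mul_assoc, show p - 2 - δ = p - 3 + 1 - δ by ring]
        exact mul_le_mul_of_nonneg_left (rpow_mul_sq_le_of_abs_le hc hb.le (by linarith)) hp.le
    _ = (p - 1) * (2 - p) / 2 ^ (p - 2 - δ) * |a| ^ (p - 2 - δ) * |b| ^ (1 + δ) := by
        rw [div_rpow (abs_nonneg a) zero_le_two]; ring
    _ ≤ _ := by
        gcongr
        exact le_add_of_nonneg_left (rpow_nonneg (abs_nonneg _) _)

theorem stmt_19 (p δ : ℝ) (hp1 : 1 < p) (hp2 : p < 2) (hδ0 : 0 < δ) (hδ : δ < p - 1) :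
    ∃ C > 0, ∀ a b : ℝ, a ≠ 0 → |b| < |a| / 2 →
      |(|a + b| ^ (p - 2) * (a + b)) - |a| ^ (p - 2) * a - (p - 1) * |a| ^ (p - 2) * b|
        ≤ C * (|a + b| ^ (p - 2 - δ) + |a| ^ (p - 2 - δ)) * |b| ^ (1 + δ) :=
  stmt_19_general p δ hp1 hp2 hδ
end
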